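/- Let Z be a commutative ring with unity and suppose that R′(Z) is an URE-group, i.e., for every integer n ≥ 1 and all pairs (α₁, ω₁), (α₂, ω₂) with αᵢ ∈ Z⟦x⟧ of constant coefficient 1 and ωᵢ ∈ J(Z), if ω₁^[n] = ω₂^[n] and ∏_{i=0}^{n−1} (α₁ ∘ ω₁^[i]) = ∏_{i=0}^{n−1} (α₂ ∘ ω₂^[i]) then α₁ = α₂ and ω₁ = ω₂. Let V ∈ Z⟦x⟧ have constant coefficient 1, let f ∈ Z⟦x⟧ have constant coefficient 1, let g ∈ J(Z), and suppose R(f,g) is in the stabiliser of the column vector of coefficients of V, i.e., f · (V ∘ g) = V. If (α, ω), with α of constant coefficient 1 and ω ∈ J(Z), is a root of order n of (f, g), i.e., ω^[n] = g and ∏_{i=0}^{n−1} (α ∘ ω^[i]) = f, then R(α,ω) is also in the stabiliser of that vector: α · (V ∘ ω) = V. -/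

import Mathlib

open PowerSeries Finset

/-- Composition `f ∘ g` of formal power series (substitution of `g` into `f`).
This coefficientwise formula agrees with the usual substitution whenever the
constant coefficient of `g` is zero, since then `g ^ j` has order at least `j`. -/
noncomputable def psComp {Z : Type*} [CommRing Z] (f g : Z⟦X⟧) : Z⟦X⟧ :=
  PowerSeries.mk fun n => ∑ j ∈ Finset.range (n + 1), coeff j f * coeff n (g ^ j)

/-- The `m`-th compositional iterate: `ω^[0] = X` and `ω^[m+1] = ω ∘ ω^[m]`. -/
noncomputable def psIter {Z : Type*} [CommRing Z] (ω : Z⟦X⟧) : ℕ → Z⟦X⟧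
  | 0 => PowerSeries.X
  | m + 1 => psComp ω (psIter ω m)

/-! Twist `α` by the coboundary of `V`: for `β := α · (V ∘ ω) · V⁻¹` the product
`∏_{i<n} β ∘ ω^[i]` telescopes to `f · (V ∘ ω^[n]) · V⁻¹ = f · (V ∘ g) · V⁻¹ = 1`.
Hence `(β, ω)` and `(1, ω)` are roots of order `n` of the same pair, so unique root
extraction forces `β = 1`, which is `α · (V ∘ ω) = V`. -/

section Composition

variable {Z : Type*} [CommRing Z]

theorem coeff_pow_eq_zero_of_lt {g : Z⟦X⟧} (hg : constantCoeff g = 0) {n j : ℕ} (h : n < j) :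
    coeff n (g ^ j) = 0 :=
  X_pow_dvd_iff.mp (pow_dvd_pow_of_dvd (X_dvd_iff.mpr hg) j) n h

theorem psComp_eq_subst {f g : Z⟦X⟧} (hg : constantCoeff g = 0) : psComp f g = f.subst g := by
  ext n
  rw [psComp, coeff_mk, coeff_subst' (HasSubst.of_constantCoeff_zero' hg),
    finsum_eq_sum_of_support_subset _ (s := range (n + 1)) ?_]
  · simp only [smul_eq_mul]
  · intro d hd
    by_contra h
    simp only [coe_range, Set.mem_Iio, not_lt] at h
    exact hd (by simp only [coeff_pow_eq_zero_of_lt hg (Nat.lt_of_succ_le h), smul_zero])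

theorem constantCoeff_psComp (f g : Z⟦X⟧) : constantCoeff (psComp f g) = constantCoeff f := by
  rw [← coeff_zero_eq_constantCoeff_apply, psComp, coeff_mk]
  simp

theorem psComp_X_right (f : Z⟦X⟧) : psComp f X = f := by
  rw [psComp_eq_subst constantCoeff_X, X_subst]

theorem psComp_one {g : Z⟦X⟧} (hg : constantCoeff g = 0) : psComp 1 g = 1 := by
  rw [psComp_eq_subst hg, ← coe_substAlgHom (HasSubst.of_constantCoeff_zero' hg), map_one]

theorem psComp_mul {a b g : Z⟦X⟧} (hg : constantCoeff g = 0) :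
    psComp (a * b) g = psComp a g * psComp b g := by
  simp only [psComp_eq_subst hg, subst_mul (HasSubst.of_constantCoeff_zero' hg)]

theorem psComp_psComp {f g h : Z⟦X⟧} (hg : constantCoeff g = 0) (hh : constantCoeff h = 0) :
    psComp (psComp f g) h = psComp f (psComp g h) := by
  have hgh : constantCoeff (psComp g h) = 0 := by rw [constantCoeff_psComp, hg]
  rw [psComp_eq_subst hgh, psComp_eq_subst hg, psComp_eq_subst hh, psComp_eq_subst hh,
    subst_comp_subst_apply (HasSubst.of_constantCoeff_zero' hg)
      (HasSubst.of_constantCoeff_zero' hh)]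

theorem constantCoeff_psIter {ω : Z⟦X⟧} (hω : constantCoeff ω = 0) :
    ∀ i, constantCoeff (psIter ω i) = 0
  | 0 => constantCoeff_X
  | i + 1 => by rw [psIter, constantCoeff_psComp, hω]

end Composition

theorem prod_psComp_psIter_mul_coboundary {Z : Type*} [CommRing Z] {α ω V W : Z⟦X⟧}
    (hω : constantCoeff ω = 0) (hVW : V * W = 1) (n : ℕ) :
    ∏ i ∈ range n, psComp (α * psComp V ω * W) (psIter ω i)
      = (∏ i ∈ range n, psComp α (psIter ω i)) * psComp V (psIter ω n) * W := by
  induction n with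
  | zero => rw [prod_range_zero, prod_range_zero, one_mul, psIter, psComp_X_right, hVW]
  | succ n ih =>
    have hψ := constantCoeff_psIter hω n
    have hinv : psComp V (psIter ω n) * psComp W (psIter ω n) = 1 := by
      rw [← psComp_mul hψ, hVW, psComp_one hψ]
    rw [prod_range_succ, prod_range_succ, ih, psComp_mul hψ, psComp_mul hψ,
      psComp_psComp hω hψ, ← psIter]
    linear_combination
      (∏ i ∈ range n, psComp α (psIter ω i)) * psComp α (psIter ω n)
        * psComp V (psIter ω (n + 1)) * W * hinv

theorem riordan_root_stabiliser_of_URE_general {Z : Type*} [CommRing Z]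
    (hURE : ∀ n : ℕ, 1 ≤ n → ∀ α₁ ω₁ α₂ ω₂ : Z⟦X⟧,
      constantCoeff α₁ = 1 → constantCoeff ω₁ = 0 → coeff 1 ω₁ = 1 →
      constantCoeff α₂ = 1 → constantCoeff ω₂ = 0 → coeff 1 ω₂ = 1 →
      psIter ω₁ n = psIter ω₂ n →
      (∏ i ∈ Finset.range n, psComp α₁ (psIter ω₁ i))
        = (∏ i ∈ Finset.range n, psComp α₂ (psIter ω₂ i)) →
      α₁ = α₂ ∧ ω₁ = ω₂)
    (V f : Z⟦X⟧) (hV : constantCoeff V = 1)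
    (g : Z⟦X⟧)
    (hstab : f * psComp V g = V)
    (n : ℕ) (hn : 1 ≤ n) (α ω : Z⟦X⟧)
    (hα : constantCoeff α = 1)
    (hω0 : constantCoeff ω = 0) (hω1 : coeff 1 ω = 1)
    (hiter : psIter ω n = g)
    (hprod : ∏ i ∈ Finset.range n, psComp α (psIter ω i) = f) :
    α * psComp V ω = V := by
  set W := invOfUnit V 1
  have hVW : V * W = 1 := mul_invOfUnit V 1 (by rw [hV, Units.val_one])
  have hβ : constantCoeff (α * psComp V ω * W) = 1 := by
    rw [map_mul, map_mul, hα, constantCoeff_psComp, hV, constantCoeff_invOfUnit, inv_one,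
      Units.val_one, one_mul, one_mul]
  have hprod_β : ∏ i ∈ range n, psComp (α * psComp V ω * W) (psIter ω i)
      = ∏ i ∈ range n, psComp 1 (psIter ω i) := by
    rw [prod_psComp_psIter_mul_coboundary hω0 hVW, hprod, hiter, hstab, hVW,
      prod_congr rfl fun i _ => psComp_one (constantCoeff_psIter hω0 i), prod_const_one]
  have hβ_one : α * psComp V ω * W = 1 :=
    (hURE n hn _ ω 1 ω hβ hω0 hω1 (map_one _) hω0 hω1 rfl hprod_β).1
  linear_combination V * hβ_one - α * psComp V ω * hVW

/-- suppose `ℛ′(Z)` is an URE-group. If `R(f,g)` stabilises the column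
vector of coefficients of `V` (with `V(0) = 1`), i.e. `f · (V ∘ g) = V`, and `R(α,ω)` is a
root of order `n` of `R(f,g)` (i.e. `ω^[n] = g` and `∏_{i=0}^{n−1}(α∘ω^[i]) = f`), then
`R(α,ω)` also stabilises that vector: `α · (V ∘ ω) = V`. -/
theorem riordan_root_stabiliser_of_URE {Z : Type*} [CommRing Z]
    (hURE : ∀ n : ℕ, 1 ≤ n → ∀ α₁ ω₁ α₂ ω₂ : Z⟦X⟧,
      constantCoeff α₁ = 1 → constantCoeff ω₁ = 0 → coeff 1 ω₁ = 1 →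
      constantCoeff α₂ = 1 → constantCoeff ω₂ = 0 → coeff 1 ω₂ = 1 →
      psIter ω₁ n = psIter ω₂ n →
      (∏ i ∈ Finset.range n, psComp α₁ (psIter ω₁ i))
        = (∏ i ∈ Finset.range n, psComp α₂ (psIter ω₂ i)) →
      α₁ = α₂ ∧ ω₁ = ω₂)
    (V f : Z⟦X⟧) (hV : constantCoeff V = 1) (hf : constantCoeff f = 1)
    (g : Z⟦X⟧) (hg0 : constantCoeff g = 0) (hg1 : coeff 1 g = 1)
    (hstab : f * psComp V g = V)
    (n : ℕ) (hn : 1 ≤ n) (α ω : Z⟦X⟧)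
    (hα : constantCoeff α = 1)
    (hω0 : constantCoeff ω = 0) (hω1 : coeff 1 ω = 1)
    (hiter : psIter ω n = g)
    (hprod : ∏ i ∈ Finset.range n, psComp α (psIter ω i) = f) :
    α * psComp V ω = V :=
  riordan_root_stabiliser_of_URE_general hURE V f hV g hstab n hn α ω hα hω0 hω1 hiter hprod
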